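/- arXiv:1311.7089 — 2 statements merged into one kernel-verified Lean document; each statement's English description precedes it below -/
import Mathlib

section
/- Let u be a fully commutative element of W(A_n) with σ_n ∈ Supp(u). Then σ_n occurs exactly once in every reduced expression of u. -/
open CoxeterSystem

def CommMove {B : Type*} (M : CoxeterMatrix B) (ω₁ ω₂ : List B) : Prop :=
  ∃ (l r : List B) (s t : B), M s t = 2 ∧ ω₁ = l ++ s :: t :: r ∧ ω₂ = l ++ t :: s :: r

def CommEquiv {B : Type*} (M : CoxeterMatrix B) : List B → List B → Prop :=
  Relation.ReflTransGen (CommMove M)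

def IsRedexOf {B W : Type*} [Group W] {M : CoxeterMatrix B} (cs : CoxeterSystem M W)
    (ω : List B) (w : W) : Prop :=
  cs.wordProd ω = w ∧ cs.IsReduced ω

def IsFC {B W : Type*} [Group W] {M : CoxeterMatrix B} (cs : CoxeterSystem M W) (w : W) : Prop :=
  ∀ ω₁ ω₂, IsRedexOf cs ω₁ w → IsRedexOf cs ω₂ w → CommEquiv M ω₁ ω₂


/-! Write `k` for a generator and suppose a reduced word of a fully commutative `u` contains a
factor `k m k` with all letters of `m` below `k`. If `k - 1` does not occur in `m`, the two `k`s
commute through `m` and cancel. If it occurs once, commuting both `k`s next to it and applying the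
braid relation gives another reduced word of `u` with one fewer `k`; but reduced words related by
commutations are permutations of each other. If it occurs at least twice, two consecutive
occurrences of `k - 1` form a shorter factor of the same shape. For `k = σₙ`, the largest
generator, any two consecutive occurrences of `σₙ` would give such a factor. -/
namespace List

variable {α : Type*} [DecidableEq α] {a : α} {l : List α}

theorem exists_eq_append_cons_notMem_of_mem (h : a ∈ l) :
    ∃ l₁ l₂, l = l₁ ++ a :: l₂ ∧ a ∉ l₁ := by
  obtain ⟨b, hb⟩ := Option.isSome_iff_exists.1 (find?_isSome.2 ⟨a, h, beq_self_eq_true a⟩)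
  obtain ⟨hba, l₁, l₂, rfl, hl₁⟩ := find?_eq_some_iff_append.1 hb
  obtain rfl : a = b := by simpa using hba
  exact ⟨l₁, l₂, rfl, fun ha => by simpa using hl₁ a ha⟩

theorem exists_eq_append_cons_append_cons_of_two_le_count (h : 2 ≤ l.count a) :
    ∃ l₁ m l₂, l = l₁ ++ a :: m ++ a :: l₂ ∧ a ∉ m := by
  obtain ⟨l₁, l', rfl, hl₁⟩ :=
    exists_eq_append_cons_notMem_of_mem (count_pos_iff.1 (by omega : 0 < l.count a))
  have : a ∈ l' := by
    rw [count_append, count_cons_self, count_eq_zero.2 hl₁] at h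
    exact count_pos_iff.1 (by omega)
  obtain ⟨m, l₂, rfl, hm⟩ := exists_eq_append_cons_notMem_of_mem this
  exact ⟨l₁, m, l₂, by simp, hm⟩

end List

theorem CommEquiv.perm {B : Type*} {M : CoxeterMatrix B} {ω₁ ω₂ : List B}
    (h : CommEquiv M ω₁ ω₂) : ω₁.Perm ω₂ := by
  induction h with
  | refl => rfl
  | tail _ hmove ih =>
    obtain ⟨l, r, s, t, -, rfl, rfl⟩ := hmove
    exact ih.trans ((List.Perm.swap t s r).append_left l)

namespace CoxeterSystem

variable {B W : Type*} [Group W] {M : CoxeterMatrix B} (cs : CoxeterSystem M W)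

theorem commute_simple_of_eq_two {i j : B} (h : M i j = 2) :
    Commute (cs.simple i) (cs.simple j) := by
  simpa [braidWord, alternatingWord, h, M.symmetric j i, wordProd_cons, commute_iff_eq]
    using cs.wordProd_braidWord_eq i j

theorem simple_braid_of_eq_three {i j : B} (h : M i j = 3) :
    cs.simple i * cs.simple j * cs.simple i = cs.simple j * cs.simple i * cs.simple j := by
  simpa [braidWord, alternatingWord, h, M.symmetric j i, wordProd_cons, mul_assoc]
    using (cs.wordProd_braidWord_eq i j).symm

theorem commute_simple_wordProd {s : B} {m : List B} (h : ∀ x ∈ m, M s x = 2) :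
    Commute (cs.simple s) (cs.wordProd m) :=
  Commute.list_prod_right _ _ fun _ hx => by
    obtain ⟨x, hxm, rfl⟩ := List.mem_map.1 hx
    exact cs.commute_simple_of_eq_two (h x hxm)

theorem not_isReduced_of_forall_eq_two {s : B} {m : List B} (h : ∀ x ∈ m, M s x = 2)
    (l r : List B) : ¬ cs.IsReduced (l ++ s :: m ++ s :: r) := by
  have hprod : cs.wordProd (l ++ s :: m ++ s :: r) = cs.wordProd (l ++ m ++ r) := by
    simp only [wordProd_append, wordProd_cons, mul_assoc]
    rw [(cs.commute_simple_wordProd h).left_comm, simple_mul_simple_cancel_left]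
  intro hred
  have := cs.length_wordProd_le (l ++ m ++ r)
  rw [← hprod, hred.eq] at this
  simp at this

end CoxeterSystem

namespace IsFC

variable {B W : Type*} [Group W] {M : CoxeterMatrix B} {cs : CoxeterSystem M W} {u : W}

theorem perm (hu : IsFC cs u) {ω₁ ω₂ : List B} (h₁ : IsRedexOf cs ω₁ u)
    (h₂ : IsRedexOf cs ω₂ u) : ω₁.Perm ω₂ :=
  (hu ω₁ ω₂ h₁ h₂).perm

theorem not_isRedexOf_braid (hu : IsFC cs u) {s t : B} (hst : M s t = 3) {m₁ m₂ : List B}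
    (h₁ : ∀ x ∈ m₁, M s x = 2) (h₂ : ∀ x ∈ m₂, M s x = 2) (l r : List B) :
    ¬ IsRedexOf cs (l ++ s :: m₁ ++ t :: m₂ ++ s :: r) u := by
  classical
  intro hω
  have hprod : cs.wordProd (l ++ m₁ ++ t :: s :: t :: m₂ ++ r) =
      cs.wordProd (l ++ s :: m₁ ++ t :: m₂ ++ s :: r) := by
    simp only [wordProd_append, wordProd_cons, mul_assoc]
    rw [(cs.commute_simple_wordProd h₁).left_comm,
      (cs.commute_simple_wordProd h₂).symm.left_comm]
    congr 2
    simp only [← mul_assoc, cs.simple_braid_of_eq_three hst]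
  have hω' : IsRedexOf cs (l ++ m₁ ++ t :: s :: t :: m₂ ++ r) u := by
    refine ⟨hprod.trans hω.1, ?_⟩
    rw [CoxeterSystem.IsReduced, hprod, hω.2.eq]
    simp only [List.length_append, List.length_cons]
    omega
  have hts : t ≠ s := by
    rintro rfl
    simp at hst
  have hcount := (hu.perm hω hω').count_eq s
  simp [List.count_append, hts] at hcount
  omega

end IsFC

namespace CoxeterMatrix

variable {n : ℕ} {i j : Fin n}

theorem A_apply_of_add_one_lt (h : (i : ℕ) + 1 < j) : CoxeterMatrix.A n j i = 2 := by
  simp only [CoxeterMatrix.A, Matrix.of_apply]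
  rw [if_neg (by omega), if_neg (by omega)]

theorem A_apply_of_add_one_eq (h : (i : ℕ) + 1 = j) : CoxeterMatrix.A n j i = 3 := by
  simp only [CoxeterMatrix.A, Matrix.of_apply]
  rw [if_neg (by omega), if_pos (Or.inl h)]

end CoxeterMatrix

open CoxeterMatrix in
theorem IsFC.not_isRedexOf_of_forall_lt {n : ℕ} {W : Type*} [Group W]
    {cs : CoxeterSystem (CoxeterMatrix.A n) W} {u : W} (hu : IsFC cs u) {k : Fin n}
    {m : List (Fin n)} (hm : ∀ x ∈ m, x < k) (l r : List (Fin n)) :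
    ¬ IsRedexOf cs (l ++ k :: m ++ k :: r) u := by
  intro hω
  by_cases hj : ∃ j ∈ m, (j : ℕ) + 1 = k
  · obtain ⟨j, hjm, hjk⟩ := hj
    have hlt : ∀ x ∈ m, x ≠ j → (x : ℕ) + 1 < k := fun x hx hxj => by
      have := hm x hx
      have : (x : ℕ) ≠ j := Fin.val_ne_of_ne hxj
      omega
    rcases (show m.count j = 1 ∨ 2 ≤ m.count j by have := List.count_pos_iff.2 hjm; omega)
      with hc | hc
    · obtain ⟨m₁, m₂, rfl, hj₁⟩ := List.exists_eq_append_cons_notMem_of_mem hjm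
      have hj₂ : j ∉ m₂ := by
        rw [List.count_append, List.count_cons_self, List.count_eq_zero.2 hj₁] at hc
        exact List.count_eq_zero.1 (by omega)
      refine hu.not_isRedexOf_braid (A_apply_of_add_one_eq hjk)
        (fun x hx => A_apply_of_add_one_lt (hlt x (by simp [hx]) (ne_of_mem_of_not_mem hx hj₁)))
        (fun x hx => A_apply_of_add_one_lt (hlt x (by simp [hx]) (ne_of_mem_of_not_mem hx hj₂)))
        l r ?_
      simpa using hω
    · obtain ⟨m₁, m₃, m₄, hsplit, hj₃⟩ :=
        List.exists_eq_append_cons_append_cons_of_two_le_count hc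
      rw [hsplit] at hω
      refine hu.not_isRedexOf_of_forall_lt (k := j) (m := m₃) (fun x hx => ?_)
        (l ++ k :: m₁) (m₄ ++ k :: r) (by simpa using hω)
      have := hlt x (by simp [hsplit, hx]) (ne_of_mem_of_not_mem hx hj₃)
      rw [Fin.lt_def]
      omega
  · push Not at hj
    refine cs.not_isReduced_of_forall_eq_two (fun x hx => A_apply_of_add_one_lt ?_) l r hω.2
    have := hm x hx
    have := hj x hx
    rw [Fin.lt_def] at *
    omega
termination_by m.length
decreasing_by simp [hsplit]; omega

open Fin.NatCast in
theorem Fin.lt_natCast_sub_one_of_ne {n : ℕ} [NeZero n] {x : Fin n}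
    (hx : x ≠ ((n - 1 : ℕ) : Fin n)) : x < ((n - 1 : ℕ) : Fin n) := by
  obtain ⟨n, rfl⟩ := Nat.exists_eq_add_one_of_ne_zero (NeZero.ne n)
  simp only [Nat.add_sub_cancel, Fin.natCast_eq_last] at hx ⊢
  exact Fin.lt_last_iff_ne_last.2 hx

open Fin.NatCast in
/-- If the generator σₙ (index `((n - 1 : ℕ) : Fin n)` of the type `Aₙ` Coxeter group) lies in the
support of a fully commutative element `u`, then it occurs exactly once in every reduced
expression of `u`. -/
theorem sigma_n_occurs_once (n : ℕ) [NeZero n] {W : Type*} [Group W]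
    (cs : CoxeterSystem (CoxeterMatrix.Aₙ n) W) (u : W) (hu : IsFC cs u)
    (hsupp : ∃ ω, IsRedexOf cs ω u ∧ ((n - 1 : ℕ) : Fin n) ∈ ω) :
    ∀ ω, IsRedexOf cs ω u → ω.count ((n - 1 : ℕ) : Fin n) = 1 := by
  intro ω hω
  obtain ⟨ω₀, hω₀, hmem⟩ := hsupp
  have hpos : 0 < ω.count ((n - 1 : ℕ) : Fin n) :=
    List.count_pos_iff.2 ((hu.perm hω₀ hω).subset hmem)
  have hlt : ¬ 2 ≤ ω.count ((n - 1 : ℕ) : Fin n) := by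
    intro h
    obtain ⟨l, m, r, rfl, hm⟩ := List.exists_eq_append_cons_append_cons_of_two_le_count h
    exact hu.not_isRedexOf_of_forall_lt
      (fun x hx => Fin.lt_natCast_sub_one_of_ne (ne_of_mem_of_not_mem hx hm)) l r hω
  omega
end

section
/- In the braid group B(Ã_n), let y = σ_j ⋯ σ_2 σ_1 σ_{j+1} ⋯ σ_{n−1} σ_n a_{n+1} with 2 ≤ j ≤ n−1, and set a_n = σ_n a_{n+1} σ_n^{-1}. Then for every r with 0 ≤ r ≤ n−j, one has y^r = (σ_j ⋯ σ_2 σ_1 σ_{j+1} ⋯ σ_{n−1} a_n)^r · σ_n σ_{n−1} ⋯ σ_{n+1−r}. -/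
/-- The defining relators of the affine braid group of type `Ãₙ`: generators indexed by
`Fin (n+1)` arranged in a cycle; cyclically adjacent generators satisfy the braid relation
`xyx = yxy`, all other pairs commute. -/
def affineBraidRels (n : ℕ) : Set (FreeGroup (Fin (n + 1))) :=
  { r | ∃ i j : Fin (n + 1),
      ((i - j = 1 ∨ j - i = 1) ∧
        r = FreeGroup.of i * FreeGroup.of j * FreeGroup.of i *
          (FreeGroup.of j * FreeGroup.of i * FreeGroup.of j)⁻¹) ∨
      (i ≠ j ∧ ¬(i - j = 1 ∨ j - i = 1) ∧
        r = FreeGroup.of i * FreeGroup.of j * (FreeGroup.of j * FreeGroup.of i)⁻¹) }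

/-- The affine braid group `B(Ãₙ)`. -/
def AffineBraidGroup (n : ℕ) : Type := PresentedGroup (affineBraidRels n)

instance (n : ℕ) : Group (AffineBraidGroup n) := by
  unfold AffineBraidGroup; infer_instance

/-- The generator with 1-based subscript `k`: `σ_k` for `1 ≤ k ≤ n`, and `a_{n+1}` for
`k = n + 1`. -/
def bgen (n : ℕ) (k : ℕ) : AffineBraidGroup n :=
  PresentedGroup.of (Fin.ofNat (n + 1) (k - 1))

/-- The product of the generators with the given (1-based) subscripts. -/
def bword (n : ℕ) (l : List ℕ) : AffineBraidGroup n := (l.map (bgen n)).prod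

/-- The decreasing word `[i, i-1, ..., j]` of (1-based) generator subscripts. -/
def decW (i j : ℕ) : List ℕ := (List.range' j (i + 1 - j)).reverse

/-- The increasing word `[i, i+1, ..., j]` of (1-based) generator subscripts. -/
def incW (i j : ℕ) : List ℕ := List.range' i (j + 1 - i)

/-!
Put `x = σⱼ ⋯ σ₁ σ_{j+1} ⋯ σ_{n-1} aₙ`; since `aₙ σₙ = σₙ a_{n+1}`, we have `y = x σₙ`.
For `j < k < n` the braid relations give `y σₖ = σ_{k+1} y`: `σ_{k+1}` commutes with
`σⱼ ⋯ σ₁`, `σₖ` commutes with `a_{n+1}`, and `σ_{k+1} σ_{j+1} ⋯ σₙ = σ_{j+1} ⋯ σₙ σₖ` by a single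
braid relation. Hence conjugation by `y` turns `D'ᵣ = σ_{n-1} ⋯ σ_{n-r}` into
`Dᵣ = σₙ ⋯ σ_{n+1-r}`, and for `r < n - j` we get `Dᵣ y = y D'ᵣ = x σₙ D'ᵣ = x D_{r+1}`,
from which `yʳ = xʳ Dᵣ` follows by induction on `r`.
-/

lemma pow_eq_pow_mul_of_mul_eq_mul_succ {M : Type*} [Monoid M] {x y : M} {D : ℕ → M}
    {N : ℕ} (hD0 : D 0 = 1) (hD : ∀ r < N, D r * y = x * D (r + 1)) (r : ℕ) (hr : r ≤ N) :
    y ^ r = x ^ r * D r := by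
  induction r with
  | zero => simp [hD0]
  | succ r ih =>
    calc y ^ (r + 1) = x ^ r * (D r * y) := by rw [pow_succ, ih (by omega), mul_assoc]
      _ = x ^ (r + 1) * D (r + 1) := by rw [hD r (by omega), ← mul_assoc, pow_succ]

lemma incW_append {a m b : ℕ} (ham : a ≤ m + 1) (hmb : m ≤ b) :
    incW a m ++ incW (m + 1) b = incW a b := by
  have h := List.range'_append_1 (s := a) (m := m + 1 - a) (n := b - m)
  rw [show a + (m + 1 - a) = m + 1 by omega, show m + 1 - a + (b - m) = b + 1 - a by omega] at h
  simpa [incW, show b + 1 - (m + 1) = b - m by omega] using h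

lemma incW_succ (k : ℕ) : incW k (k + 1) = [k, k + 1] := by
  rw [incW, show k + 1 + 1 - k = 2 by omega]
  rfl

lemma incW_self (k : ℕ) : incW k k = [k] := by
  simp [incW]

lemma mem_decW {i m k : ℕ} : k ∈ decW i m ↔ m ≤ k ∧ k ≤ i := by
  simp only [decW, List.mem_reverse, List.mem_range'_1]
  omega

lemma decW_succ_succ (i m : ℕ) : decW (i + 1) (m + 1) = (decW i m).map (· + 1) := by
  rw [decW, decW, List.map_reverse, show i + 1 + 1 - (m + 1) = i + 1 - m by omega,
    show (· + 1) = (1 + ·) from funext fun x => add_comm x 1, List.map_add_range', add_comm]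

lemma decW_succ_left {i m : ℕ} (h : m ≤ i + 1) : decW (i + 1) m = (i + 1) :: decW i m := by
  rw [decW, decW, show i + 1 + 1 - m = i + 1 - m + 1 by omega, List.range'_1_concat,
    List.reverse_append, show m + (i + 1 - m) = i + 1 by omega]
  rfl

lemma Fin.sub_eq_one_iff {n : ℕ} {i k : Fin (n + 1)} :
    i - k = 1 ↔ (i : ℕ) = k + 1 ∨ (i : ℕ) = 0 ∧ (k : ℕ) = n := by
  rw [sub_eq_iff_eq_add', Fin.ext_iff, Fin.val_add_one]
  have := i.isLt
  split_ifs with h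
  · rw [Fin.ext_iff, Fin.val_last] at h
    omega
  · rw [Fin.ext_iff, Fin.val_last] at h
    omega

namespace AffineBraidGroup

variable {n : ℕ}

lemma of_commute {i k : Fin (n + 1)} (hne : i ≠ k) (hnadj : ¬(i - k = 1 ∨ k - i = 1)) :
    Commute (PresentedGroup.of (rels := affineBraidRels n) i) (PresentedGroup.of k) :=
  PresentedGroup.mk_eq_mk_of_mul_inv_mem ⟨i, k, .inr ⟨hne, hnadj, rfl⟩⟩

lemma of_braid {i k : Fin (n + 1)} (hadj : i - k = 1 ∨ k - i = 1) :
    PresentedGroup.of (rels := affineBraidRels n) i * .of k * .of i = .of k * .of i * .of k :=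
  PresentedGroup.mk_eq_mk_of_mul_inv_mem ⟨i, k, .inl ⟨hadj, rfl⟩⟩

lemma val_bgen_index {k : ℕ} (hk : k ≤ n + 1) : (Fin.ofNat (n + 1) (k - 1) : ℕ) = k - 1 :=
  Nat.mod_eq_of_lt (by omega)

/-- `hcyc` excludes the pair `σ₁`, `a_{n+1}`, which are adjacent in the cycle. -/
lemma bgen_commute {k l : ℕ} (hl : 1 ≤ l) (hlk : l + 2 ≤ k) (hk : k ≤ n + 1)
    (hcyc : l = 1 → k ≤ n) : Commute (bgen n k) (bgen n l) := by
  have hl' := val_bgen_index (show l ≤ n + 1 by omega)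
  apply of_commute
  · rw [ne_eq, Fin.ext_iff, val_bgen_index hk, hl']
    omega
  · rw [Fin.sub_eq_one_iff, Fin.sub_eq_one_iff, val_bgen_index hk, hl']
    omega

lemma bgen_braid {k : ℕ} (hk : 1 ≤ k) (hkn : k ≤ n) :
    bgen n (k + 1) * bgen n k * bgen n (k + 1) = bgen n k * bgen n (k + 1) * bgen n k := by
  apply of_braid
  simp only [Fin.sub_eq_one_iff, val_bgen_index (show k ≤ n + 1 by omega),
    val_bgen_index (show k + 1 ≤ n + 1 by omega)]
  omega

lemma bword_cons (k : ℕ) (l : List ℕ) : bword n (k :: l) = bgen n k * bword n l := by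
  simp [bword]

lemma bword_append (l₁ l₂ : List ℕ) : bword n (l₁ ++ l₂) = bword n l₁ * bword n l₂ := by
  simp [bword]

lemma bword_singleton (k : ℕ) : bword n [k] = bgen n k := by
  simp [bword]

lemma commute_bword {l : List ℕ} {g : AffineBraidGroup n}
    (h : ∀ m ∈ l, Commute (bgen n m) g) : Commute (bword n l) g :=
  Commute.list_prod_left _ _ (by simpa using h)

lemma semiconjBy_bword_map_succ {l : List ℕ} {g : AffineBraidGroup n}
    (h : ∀ m ∈ l, SemiconjBy g (bgen n m) (bgen n (m + 1))) :
    SemiconjBy g (bword n l) (bword n (l.map (· + 1))) := by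
  induction l with
  | nil => exact SemiconjBy.one_right g
  | cons m l ih =>
    rw [List.map_cons, bword_cons, bword_cons]
    exact (h m (by simp)).mul_right (ih fun m hm => h m (by simp [hm]))

lemma semiconjBy_bword_incW {a b k : ℕ} (ha : 1 ≤ a) (hak : a ≤ k) (hkb : k < b) (hb : b ≤ n) :
    SemiconjBy (bword n (incW a b)) (bgen n k) (bgen n (k + 1)) := by
  have hsplit : incW a b = incW a (k - 1) ++ ([k, k + 1] ++ incW (k + 1 + 1) b) := by
    rw [← incW_succ, incW_append (a := k) (m := k + 1) (by omega) (by omega),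
      ← incW_append (m := k - 1) (by omega) (by omega), show k - 1 + 1 = k by omega]
  have hbraid : SemiconjBy (bword n [k, k + 1]) (bgen n k) (bgen n (k + 1)) := by
    rw [SemiconjBy, bword_cons, bword_singleton, ← mul_assoc, bgen_braid (by omega) (by omega)]
  rw [hsplit, bword_append, bword_append, ← mul_assoc]
  refine .mul_left (.mul_left (commute_bword fun m hm => ?_) hbraid)
    (commute_bword fun m hm => ?_)
  · rw [incW, List.mem_range'_1] at hm
    exact (bgen_commute (by omega) (by omega) (by omega) (by omega)).symm
  · rw [incW, List.mem_range'_1] at hm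
    exact bgen_commute (by omega) (by omega) (by omega) (by omega)

lemma semiconjBy_bword_y {j k : ℕ} (hjk : j < k) (hk : 2 ≤ k) (hkn : k < n) :
    SemiconjBy (bword n (decW j 1 ++ incW (j + 1) n ++ [n + 1])) (bgen n k) (bgen n (k + 1)) := by
  rw [bword_append, bword_append, bword_singleton]
  refine .mul_left (.mul_left (commute_bword fun m hm => ?_)
    (semiconjBy_bword_incW (by omega) hjk hkn le_rfl))
    (bgen_commute (by omega) (by omega) le_rfl (by omega))
  rw [mem_decW] at hm
  exact (bgen_commute (by omega) (by omega) (by omega) (by omega)).symm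

lemma bword_y_eq {j : ℕ} (hjn : j < n) :
    bword n (decW j 1 ++ incW (j + 1) n ++ [n + 1]) =
      bword n (decW j 1 ++ incW (j + 1) (n - 1)) * (bgen n n * bgen n (n + 1) * (bgen n n)⁻¹) *
        bgen n n := by
  have hinc := incW_append (a := j + 1) (m := n - 1) (b := n) (by omega) (by omega)
  rw [Nat.sub_add_cancel (by omega), incW_self] at hinc
  simp only [← hinc, bword_append, bword_singleton]
  group

lemma bword_decW_mul_y {j r : ℕ} (hj : 1 ≤ j) (hr : r < n - j) :
    bword n (decW n (n + 1 - r)) * bword n (decW j 1 ++ incW (j + 1) n ++ [n + 1]) =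
      bword n (decW j 1 ++ incW (j + 1) (n - 1)) * (bgen n n * bgen n (n + 1) * (bgen n n)⁻¹) *
        bword n (decW n (n - r)) := by
  obtain ⟨n, rfl⟩ : ∃ m, n = m + 1 := ⟨n - 1, by omega⟩
  have hshift : SemiconjBy (bword (n + 1) (decW j 1 ++ incW (j + 1) (n + 1) ++ [n + 1 + 1]))
      (bword (n + 1) (decW n (n + 1 - r))) (bword (n + 1) (decW (n + 1) (n + 1 + 1 - r))) := by
    rw [show n + 1 + 1 - r = n + 1 - r + 1 by omega, decW_succ_succ]
    refine semiconjBy_bword_map_succ fun m hm => ?_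
    rw [mem_decW] at hm
    exact semiconjBy_bword_y (by omega) (by omega) (by omega)
  rw [← hshift.eq, bword_y_eq (by omega), decW_succ_left (by omega), bword_cons, mul_assoc]

end AffineBraidGroup

open AffineBraidGroup in
theorem braid_power_formula_general (n j : ℕ) (hj : 2 ≤ j)
    (r : ℕ) (hr : r ≤ n - j) :
    (bword n (decW j 1 ++ incW (j + 1) n ++ [n + 1])) ^ r =
      (bword n (decW j 1 ++ incW (j + 1) (n - 1)) *
        (bgen n n * bgen n (n + 1) * (bgen n n)⁻¹)) ^ r *
      bword n (decW n (n + 1 - r)) := by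
  refine pow_eq_pow_mul_of_mul_eq_mul_succ (D := fun r => bword n (decW n (n + 1 - r)))
    ?_ (fun r hr => ?_) r hr
  · simp [decW, bword]
  · simpa only [Nat.add_sub_add_right] using bword_decW_mul_y (by omega) hr

/-- Lemma (case 1): in `B(Ãₙ)`, let `y = σⱼ ⋯ σ₂σ₁ σ_{j+1} ⋯ σₙ₋₁σₙ a_{n+1}` with
`2 ≤ j ≤ n - 1`, and `aₙ = σₙ a_{n+1} σₙ⁻¹`.  For every `0 ≤ r ≤ n - j`,
`y^r = (σⱼ ⋯ σ₂σ₁ σ_{j+1} ⋯ σₙ₋₁ aₙ)^r · σₙ σₙ₋₁ ⋯ σ_{n+1-r}`. -/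
theorem braid_power_formula (n j : ℕ) (hj : 2 ≤ j) (hjn : j ≤ n - 1) (hn : 2 ≤ n)
    (r : ℕ) (hr : r ≤ n - j) :
    (bword n (decW j 1 ++ incW (j + 1) n ++ [n + 1])) ^ r =
      (bword n (decW j 1 ++ incW (j + 1) (n - 1)) *
        (bgen n n * bgen n (n + 1) * (bgen n n)⁻¹)) ^ r *
      bword n (decW n (n + 1 - r)) :=
  braid_power_formula_general n j hj r hr
end
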